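/- For any point z on the unit circle, the logarithmic potential of the equilibrium measure equals (V(z)-V_0)/2: that is, ∫₀^{2π} log|e^{iθ}-z| ψ(e^{iθ}) dθ = (V(z)-V_0)/2, where ψ is the equilibrium density and V_0 the zeroth Fourier coefficient of V. -/

import Mathlib

/-!
Write `log ‖e^{iφ} - e^{iθ}‖ = F (φ - θ)` with `F x = log ‖e^{ix} - 1‖`. The kernel `F` is
`2π`-periodic with mean zero over a period, so by Fubini the `φ`-integral over `[0, 2π]` of the
left side of the Euler–Lagrange equation vanishes. Integrating the Euler–Lagrange equation thus
gives `∫ V = 2πℓ`, i.e. `ℓ = V₀`, and the claim is the Euler–Lagrange equation itself, read with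
the symmetric kernel `log ‖e^{iθ} - e^{iφ}‖`.
-/

open MeasureTheory Real

namespace Function.Periodic

variable {F : ℝ → ℝ} {T : ℝ}

theorem intervalIntegral_comp_sub_right_eq (hF : Periodic F T) (θ : ℝ) :
    ∫ φ in 0..T, F (φ - θ) = ∫ x in 0..T, F x := by
  rw [intervalIntegral.integral_comp_sub_right, zero_sub, sub_eq_neg_add,
    hF.intervalIntegral_add_eq (-θ) 0, zero_add]

theorem integral_integral_comp_sub_mul {ψ : ℝ → ℝ} (hF : Periodic F T) (hT : 0 < T)
    (hFm : Measurable F) (hFi : IntervalIntegrable F volume 0 T)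
    (hψ : IntervalIntegrable ψ volume 0 T) :
    ∫ φ in 0..T, ∫ θ in 0..T, F (φ - θ) * ψ θ = (∫ x in 0..T, F x) * ∫ θ in 0..T, ψ θ := by
  set μ := volume.restrict (Set.Ioc 0 T)
  have hψμ : Integrable ψ μ := (intervalIntegrable_iff_integrableOn_Ioc_of_le hT.le).mp hψ
  have hslice (θ : ℝ) : Integrable (fun φ ↦ F (φ - θ) * ψ θ) μ := by
    rw [← IntegrableOn, ← intervalIntegrable_iff_integrableOn_Ioc_of_le hT.le]
    have := (hF.intervalIntegrable₀ hT.ne' hFi (-θ) (T - θ)).comp_sub_right θ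
    simpa using this.mul_const (ψ θ)
  have hnorm (θ : ℝ) : ∫ φ, ‖F (φ - θ) * ψ θ‖ ∂μ = (∫ x in 0..T, |F x|) * |ψ θ| := by
    simp only [norm_mul, Real.norm_eq_abs, μ, ← intervalIntegral.integral_of_le hT.le,
      intervalIntegral.integral_mul_const]
    exact congrArg (· * |ψ θ|) ((hF.comp abs).intervalIntegral_comp_sub_right_eq θ)
  have hprod : Integrable (Function.uncurry fun θ φ ↦ F (φ - θ) * ψ θ) (μ.prod μ) := by
    refine (integrable_prod_iff ?_).mpr ⟨.of_forall hslice, ?_⟩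
    · exact ((hFm.comp (measurable_snd.sub measurable_fst)).aestronglyMeasurable).mul
        hψμ.aestronglyMeasurable.comp_fst
    · simp only [Function.uncurry_apply_pair, hnorm]
      exact hψμ.abs.const_mul _
  have hinner (θ : ℝ) : ∫ φ, F (φ - θ) * ψ θ ∂μ = (∫ x in 0..T, F x) * ψ θ := by
    rw [integral_mul_const, ← intervalIntegral.integral_of_le hT.le,
      hF.intervalIntegral_comp_sub_right_eq θ]
  calc ∫ φ in 0..T, ∫ θ in 0..T, F (φ - θ) * ψ θ
      = ∫ θ, ∫ φ, F (φ - θ) * ψ θ ∂μ ∂μ := by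
        simp only [intervalIntegral.integral_of_le hT.le]
        exact (integral_integral_swap hprod).symm
    _ = (∫ x in 0..T, F x) * ∫ θ in 0..T, ψ θ := by
        rw [integral_congr_ae (.of_forall hinner), integral_const_mul,
          intervalIntegral.integral_of_le hT.le (f := ψ)]

end Function.Periodic

theorem norm_exp_mul_I_sub_exp_mul_I_eq_norm_circleMap_sub_one (φ θ : ℝ) :
    ‖Complex.exp (φ * Complex.I) - Complex.exp (θ * Complex.I)‖ = ‖circleMap 0 1 (φ - θ) - 1‖ := by
  have : Complex.exp (φ * Complex.I) - Complex.exp (θ * Complex.I)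
      = Complex.exp (θ * Complex.I) * (circleMap 0 1 (φ - θ) - 1) := by
    rw [circleMap_zero, Complex.ofReal_one, one_mul, mul_sub, mul_one, ← Complex.exp_add]
    push_cast
    ring_nf
  rw [this, norm_mul, Complex.norm_exp_ofReal_mul_I, one_mul]

theorem integral_log_norm_circleMap_sub_one :
    ∫ x in 0..2 * π, log ‖circleMap 0 1 x - 1‖ = 0 := by
  have := circleAverage_log_norm_sub_const₁ (a := 1) norm_one
  simpa [circleAverage_def, pi_ne_zero] using this

theorem log_potential_eq_half_V_sub_V0_general
    (V ψ : ℝ → ℝ) (hVc : Continuous V) (hψc : Continuous ψ)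
    (ℓ : ℝ)
    (hEL : ∀ φ : ℝ,
      2 * ∫ θ in (0:ℝ)..(2*π),
        Real.log (‖Complex.exp (φ * Complex.I) - Complex.exp (θ * Complex.I)‖) * ψ θ
        = V φ - ℓ)
    (φ : ℝ) :
    (∫ θ in (0:ℝ)..(2*π),
      Real.log (‖Complex.exp (θ * Complex.I) - Complex.exp (φ * Complex.I)‖) * ψ θ)
      = (V φ - (1/(2*π)) * ∫ θ in (0:ℝ)..(2*π), V θ) / 2 := by
  set F : ℝ → ℝ := fun x ↦ log ‖circleMap 0 1 x - 1‖
  have hF : Function.Periodic F (2 * π) := fun x ↦ by simp only [F, periodic_circleMap 0 1 x]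
  have hEL' (φ : ℝ) : ∫ θ in 0..2 * π, F (φ - θ) * ψ θ = (V φ - ℓ) / 2 := by
    simp only [F, ← norm_exp_mul_I_sub_exp_mul_I_eq_norm_circleMap_sub_one]
    linarith [hEL φ]
  have hV₀ : ∫ θ in 0..2 * π, V θ = 2 * π * ℓ := by
    have := hF.integral_integral_comp_sub_mul two_pi_pos (by fun_prop)
      (circleIntegrable_log_norm_sub_const 1) (hψc.intervalIntegrable 0 (2 * π))
    rw [integral_log_norm_circleMap_sub_one, zero_mul] at this
    simp only [hEL', intervalIntegral.integral_div,
      intervalIntegral.integral_sub (hVc.intervalIntegrable _ _) intervalIntegrable_const,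
      intervalIntegral.integral_const, smul_eq_mul, sub_zero] at this
    linarith
  simp only [norm_sub_rev _ (Complex.exp (φ * Complex.I))]
  rw [hV₀, one_div, inv_mul_cancel_left₀ two_pi_pos.ne', ← hEL φ]
  ring

/-- The logarithmic potential of the equilibrium measure equals `(V(z) - V₀)/2` on the
unit circle.  Here points of the circle are parametrized by their angle, `ψ` is the
equilibrium density (a probability density satisfying the Euler–Lagrange equality with
some constant `ℓ`), and `V₀ = (1/2π)∫ V` is the zeroth Fourier coefficient of `V`. -/
theorem log_potential_eq_half_V_sub_V0
    (V ψ : ℝ → ℝ) (hVc : Continuous V) (hψc : Continuous ψ) (hψpos : ∀ θ, 0 < ψ θ)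
    (ℓ : ℝ)
    (hprob : (∫ θ in (0:ℝ)..(2*π), ψ θ) = 1)
    (hEL : ∀ φ : ℝ,
      2 * ∫ θ in (0:ℝ)..(2*π),
        Real.log (‖Complex.exp (φ * Complex.I) - Complex.exp (θ * Complex.I)‖) * ψ θ
        = V φ - ℓ)
    (φ : ℝ) :
    (∫ θ in (0:ℝ)..(2*π),
      Real.log (‖Complex.exp (θ * Complex.I) - Complex.exp (φ * Complex.I)‖) * ψ θ)
      = (V φ - (1/(2*π)) * ∫ θ in (0:ℝ)..(2*π), V θ) / 2 :=
  log_potential_eq_half_V_sub_V0_general V ψ hVc hψc ℓ hEL φ
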